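/- For every integer l ≥ 1, the 2-adic valuation of ε_l equals −l: v_2(ε_l) = −l. In particular ε_l ≠ 0. -/

import Mathlib

/-
Put `y = cosh √x - 1 = Σ_{j ≥ 1} x^j / (2j)!`. Expanding `y^i` over compositions `j₁+⋯+jᵢ = l`,
the defining identity of `ε` says that `D(y) = Σ 2^i εᵢ y^i` satisfies
`D(cosh √x - 1) = sinh √x / √x = Σ x^l / (2l+1)!`, i.e. `D(y) = √(y² + 2y) / arcosh (1 + y)`.
The reciprocal `C(y) = arcosh (1 + y) / √(y² + 2y)` satisfies `(y² + 2y) C' + (1 + y) C = 1`, so its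
coefficients obey `(2n+1) cₙ = -n cₙ₋₁`: `c₀ = 1`, `c₁ = -1/3` is a `2`-adic unit and `v₂(cₙ) ≥ 1`
for `n ≥ 2`. Solving `C D = 1` coefficient by coefficient shows that every `2^l ε_l` is a `2`-adic
unit. All of this is formal: `C D = 1` is checked after substituting `cosh √x - 1`, which is
injective since that series starts with `x / 2`.
-/

open Finset

/-- The defining property of the sequence `ε`: `ε 0 = 1` and for each `l ≥ 1`,
`1/(2l+1)! = ∑_{i=1}^{l} ∑_{j₁+⋯+jᵢ=l, jₜ ≥ 1} 2^i εᵢ / ((2j₁)!⋯(2jᵢ)!)`,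
the inner sum ranging over ordered `i`-tuples of positive integers summing to `l`. -/
def IsEpsilon (ε : ℕ → ℚ) : Prop :=
  ε 0 = 1 ∧ ∀ l : ℕ, 1 ≤ l →
    (1 : ℚ) / ((2 * l + 1).factorial : ℚ) =
      ∑ i ∈ Finset.Icc 1 l,
        ∑ c ∈ (Fintype.piFinset fun _ : Fin i => Finset.Icc 1 l).filter
            (fun c => ∑ t, c t = l),
          2 ^ i * ε i / ∏ t, ((2 * c t).factorial : ℚ)

open PowerSeries

namespace PowerSeries

theorem coeff_X_mul_derivative {R : Type*} [CommSemiring R] (f : R⟦X⟧) (n : ℕ) :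
    coeff n (X * d⁄dX R f) = n * coeff n f := by
  cases n with
  | zero => simp
  | succ n => rw [coeff_succ_X_mul, coeff_derivative, Nat.cast_succ, mul_comm]

theorem coeff_pow_eq_zero_of_lt {R : Type*} [CommSemiring R] {φ : R⟦X⟧}
    (hφ : constantCoeff φ = 0) {n i : ℕ} (h : n < i) : coeff n (φ ^ i) = 0 :=
  X_pow_dvd_iff.1 (pow_dvd_pow_of_dvd (X_dvd_iff.2 hφ) i) n h

theorem coeff_pow_of_constantCoeff_eq_zero {R : Type*} [CommSemiring R] {φ : R⟦X⟧}
    (hφ : constantCoeff φ = 0) (i n : ℕ) :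
    coeff n (φ ^ i) = ∑ c ∈ (Fintype.piFinset fun _ : Fin i => Icc 1 n).filter
      (fun c => ∑ t, c t = n), ∏ t, coeff (c t) φ := by
  rw [← Fin.prod_const, coeff_prod, ← sum_filter_of_ne (p := fun l => ∀ t, l t ≠ 0)]
  · refine sum_nbij' (fun l => ⇑l) (fun c => Finsupp.equivFunOnFinite.symm c) ?_ ?_ ?_ ?_ ?_
    · intro l hl
      simp only [mem_filter, mem_finsuppAntidiag, subset_univ, and_true, Fintype.mem_piFinset,
        mem_Icc] at hl ⊢
      refine ⟨fun t => ⟨Nat.one_le_iff_ne_zero.2 (hl.2 t), ?_⟩, hl.1⟩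
      rw [← hl.1]
      exact single_le_sum (fun _ _ => Nat.zero_le _) (mem_univ t)
    · intro c hc
      simp only [mem_filter, mem_finsuppAntidiag, subset_univ, and_true, Fintype.mem_piFinset,
        mem_Icc] at hc ⊢
      exact ⟨by simpa using hc.2, fun t => by simpa [← Nat.one_le_iff_ne_zero] using (hc.1 t).1⟩
    · intro l _
      simp
    · intro c _
      simp
    · intro l _
      simp
  · intro l _ hl t ht
    exact hl (prod_eq_zero (mem_univ t) (by simp [ht, hφ]))

theorem coeff_subst_eq_sum_range {R : Type*} [CommRing R] {φ : R⟦X⟧}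
    (hφ : constantCoeff φ = 0) (f : R⟦X⟧) (n : ℕ) :
    coeff n (subst φ f) = ∑ i ∈ range (n + 1), coeff i f * coeff n (φ ^ i) := by
  rw [coeff_subst' (HasSubst.of_constantCoeff_zero' hφ), finsum_eq_sum_of_support_subset]
  · rfl
  · intro i hi
    rw [coe_range, Set.mem_Iio, Nat.lt_succ_iff]
    by_contra! h
    exact hi (by simp only [coeff_pow_eq_zero_of_lt hφ h, smul_zero])

theorem subst_injective {R : Type*} [CommRing R] {P : R⟦X⟧}
    (hP : constantCoeff P = 0) (hP' : IsUnit (coeff 1 P)) :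
    Function.Injective (subst P : R⟦X⟧ → R⟦X⟧) := by
  have hinv (f : R⟦X⟧) : subst (P.substInvOfIsUnit hP') (subst P f) = f := by
    rw [subst_comp_subst_apply (HasSubst.of_constantCoeff_zero' hP)
      (HasSubst.substInvOfIsUnit P hP'), subst_substInvOfIsUnit_right P hP hP', X_subst]
  intro f g hfg
  rw [← hinv f, ← hinv g, hfg]

theorem eq_one_of_two_mul_X_mul_derivative_add_self {K : Type*} [Field K] [CharZero K]
    {f : K⟦X⟧} (h : 2 * (X * d⁄dX K f) + f = 1) : f = 1 := by
  ext n
  have hn := congrArg (coeff n) h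
  rw [map_add, show (2 : K⟦X⟧) = C 2 from (map_ofNat C 2).symm, coeff_C_mul,
    coeff_X_mul_derivative] at hn
  rcases n with _ | n
  · simpa using hn
  · have h2n : (2 * (n + 1) + 1 : K) ≠ 0 := by exact_mod_cast Nat.succ_ne_zero (2 * (n + 1))
    rw [coeff_one, if_neg n.succ_ne_zero] at hn ⊢
    push_cast at hn
    exact (mul_eq_zero.1 (by linear_combination hn)).resolve_left h2n

theorem padicNorm_coeff_eq_one_of_mul_eq_one {p : ℕ} [Fact p.Prime] {f g : ℚ⟦X⟧}
    (hfg : f * g = 1) (h0 : constantCoeff f = 1) (h1 : padicNorm p (coeff 1 f) = 1)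
    (h2 : ∀ a, 2 ≤ a → padicNorm p (coeff a f) < 1) (n : ℕ) :
    padicNorm p (coeff n g) = 1 := by
  induction n using Nat.strong_induction_on with
  | _ n ih =>
  rcases n with _ | n
  · have := congrArg constantCoeff hfg
    rw [map_mul, h0, one_mul, map_one] at this
    rw [coeff_zero_eq_constantCoeff_apply, this, padicNorm.one]
  -- `hn : Σ_{k<n} f_{k+2} g_{n-1-k} + f₁ gₙ + g_{n+1} = 0`, where only `f₁ gₙ` is a unit
  have hn := congrArg (coeff (n + 1)) hfg
  rw [coeff_mul, Nat.sum_antidiagonal_eq_sum_range_succ_mk, sum_range_succ', sum_range_succ',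
    coeff_one, if_neg n.succ_ne_zero, coeff_zero_eq_constantCoeff_apply, h0, one_mul,
    Nat.sub_zero, show n + 1 - (0 + 1) = n by omega] at hn
  have hlead : padicNorm p (coeff 1 f * coeff n g) = 1 := by
    rw [padicNorm.mul, h1, ih n n.lt_succ_self, one_mul]
  have htail : padicNorm p (∑ k ∈ range n, coeff (k + 1 + 1) f * coeff (n + 1 - (k + 1 + 1)) g)
      < 1 := by
    refine padicNorm.sum_lt' (fun k _ => ?_) one_pos
    rw [padicNorm.mul, ih _ (by omega), mul_one]
    exact h2 _ (by omega)
  rw [eq_neg_of_add_eq_zero_right hn, padicNorm.neg, add_comm,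
    padicNorm.add_eq_max_of_ne (by rw [hlead]; exact htail.ne'), hlead, max_eq_left htail.le]

end PowerSeries

noncomputable def coshSqrt : ℚ⟦X⟧ := mk fun n => ((2 * n).factorial : ℚ)⁻¹

noncomputable def sinhSqrtDivSqrt : ℚ⟦X⟧ := mk fun n => ((2 * n + 1).factorial : ℚ)⁻¹

theorem two_mul_derivative_coshSqrt : 2 * d⁄dX ℚ coshSqrt = sinhSqrtDivSqrt := by
  ext n
  rw [show (2 : ℚ⟦X⟧) = C 2 from (map_ofNat C 2).symm, coeff_C_mul, coeff_derivative,
    coshSqrt, sinhSqrtDivSqrt, coeff_mk, coeff_mk,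
    show 2 * (n + 1) = 2 * n + 1 + 1 by ring, Nat.factorial_succ]
  push_cast
  field_simp
  ring

theorem two_mul_X_mul_derivative_sinhSqrtDivSqrt_add_self :
    2 * (X * d⁄dX ℚ sinhSqrtDivSqrt) + sinhSqrtDivSqrt = coshSqrt := by
  ext n
  rw [map_add, show (2 : ℚ⟦X⟧) = C 2 from (map_ofNat C 2).symm, coeff_C_mul,
    coeff_X_mul_derivative, coshSqrt, sinhSqrtDivSqrt, coeff_mk, coeff_mk, Nat.factorial_succ]
  push_cast
  field_simp

theorem X_mul_sinhSqrtDivSqrt_sq : X * sinhSqrtDivSqrt ^ 2 = coshSqrt ^ 2 - 1 := by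
  apply derivative.ext
  · rw [map_sub, derivative_one, sub_zero, Derivation.leibniz, Derivation.leibniz_pow,
      Derivation.leibniz_pow, derivative_X]
    simp only [smul_eq_mul, nsmul_eq_mul]
    linear_combination sinhSqrtDivSqrt * two_mul_X_mul_derivative_sinhSqrtDivSqrt_add_self -
      coshSqrt * two_mul_derivative_coshSqrt
  · simp [coshSqrt]

theorem constantCoeff_coshSqrt_sub_one : constantCoeff (coshSqrt - 1) = 0 := by
  simp [coshSqrt]

theorem hasSubst_coshSqrt_sub_one : HasSubst (coshSqrt - 1) :=
  HasSubst.of_constantCoeff_zero' constantCoeff_coshSqrt_sub_one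

theorem coeff_coshSqrt_sub_one {n : ℕ} (hn : n ≠ 0) :
    coeff n (coshSqrt - 1) = ((2 * n).factorial : ℚ)⁻¹ := by
  rw [map_sub, coeff_one, if_neg hn, sub_zero, coshSqrt, coeff_mk]

theorem isUnit_coeff_one_coshSqrt_sub_one : IsUnit (coeff 1 (coshSqrt - 1)) := by
  rw [coeff_coshSqrt_sub_one one_ne_zero]
  norm_num

/-- The coefficients of `arcosh (1 + y) / √(y² + 2y)`. -/
def arcoshCoeff : ℕ → ℚ
  | 0 => 1
  | n + 1 => -((n + 1) * arcoshCoeff n) / (2 * n + 3)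

noncomputable def arcoshSeries : ℚ⟦X⟧ := mk arcoshCoeff

theorem arcoshSeries_ode : X * d⁄dX ℚ arcoshSeries * (X + 2) + arcoshSeries * (1 + X) = 1 := by
  ext n
  rw [show X * d⁄dX ℚ arcoshSeries * (X + 2) + arcoshSeries * (1 + X) =
    X * (X * d⁄dX ℚ arcoshSeries + arcoshSeries) + 2 * (X * d⁄dX ℚ arcoshSeries) + arcoshSeries
    by ring]
  rcases n with _ | n
  · simp [arcoshSeries, arcoshCoeff]
  · rw [map_add, map_add, coeff_succ_X_mul, map_add,
      show (2 : ℚ⟦X⟧) = C 2 from (map_ofNat C 2).symm, coeff_C_mul, coeff_X_mul_derivative,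
      coeff_X_mul_derivative, coeff_one, if_neg n.succ_ne_zero, arcoshSeries, coeff_mk,
      coeff_mk, arcoshCoeff]
    push_cast
    field_simp
    ring

theorem subst_arcoshSeries_mul_sinhSqrtDivSqrt :
    subst (coshSqrt - 1) arcoshSeries * sinhSqrtDivSqrt = 1 := by
  have hode := congrArg (substAlgHom hasSubst_coshSqrt_sub_one) arcoshSeries_ode
  simp only [map_add, map_mul, map_one, map_ofNat, substAlgHom_X, coe_substAlgHom] at hode
  apply eq_one_of_two_mul_X_mul_derivative_add_self
  rw [Derivation.leibniz, derivative_subst hasSubst_coshSqrt_sub_one, map_sub, derivative_one,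
    sub_zero]
  simp only [smul_eq_mul]
  -- with `K = coshSqrt`, `S = sinhSqrtDivSqrt`, `C = arcoshSeries` and `A = K - 1`:
  -- `2X (C(A) S)' + C(A) S = C'(A) X S² + C(A) (2X S' + S) = C'(A) (K² - 1) + C(A) K = 1`
  linear_combination hode + subst (coshSqrt - 1) arcoshSeries *
      two_mul_X_mul_derivative_sinhSqrtDivSqrt_add_self +
    subst (coshSqrt - 1) (d⁄dX ℚ arcoshSeries) * X * sinhSqrtDivSqrt *
      two_mul_derivative_coshSqrt +
    subst (coshSqrt - 1) (d⁄dX ℚ arcoshSeries) * X_mul_sinhSqrtDivSqrt_sq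

theorem IsEpsilon.subst_coshSqrt_sub_one {ε : ℕ → ℚ} (hε : IsEpsilon ε) :
    subst (coshSqrt - 1) (mk fun i => 2 ^ i * ε i) = sinhSqrtDivSqrt := by
  ext l
  rw [coeff_subst_eq_sum_range constantCoeff_coshSqrt_sub_one, sinhSqrtDivSqrt, coeff_mk]
  rcases Nat.eq_zero_or_pos l with rfl | hl
  · simp [hε.1]
  rw [← one_div, hε.2 l hl, sum_range_eq_add_Ico _ (Nat.zero_lt_succ l), pow_zero, coeff_one,
    if_neg hl.ne', mul_zero, zero_add, Nat.succ_eq_add_one, Ico_add_one_right_eq_Icc]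
  refine sum_congr rfl fun i _ => ?_
  rw [coeff_pow_of_constantCoeff_eq_zero constantCoeff_coshSqrt_sub_one, coeff_mk, mul_sum]
  refine sum_congr rfl fun c hc => ?_
  have hc0 (t : Fin i) : c t ≠ 0 := by
    have := Fintype.mem_piFinset.1 (mem_filter.1 hc).1 t
    rw [mem_Icc] at this
    omega
  simp only [coeff_coshSqrt_sub_one (hc0 _), prod_inv_distrib, div_eq_mul_inv]

theorem IsEpsilon.arcoshSeries_mul {ε : ℕ → ℚ} (hε : IsEpsilon ε) :
    arcoshSeries * mk (fun i => 2 ^ i * ε i) = 1 := by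
  apply subst_injective constantCoeff_coshSqrt_sub_one isUnit_coeff_one_coshSqrt_sub_one
  rw [subst_mul hasSubst_coshSqrt_sub_one, hε.subst_coshSqrt_sub_one,
    subst_arcoshSeries_mul_sinhSqrtDivSqrt, ← coe_substAlgHom hasSubst_coshSqrt_sub_one, map_one]

theorem padicNorm_two_arcoshCoeff_one : padicNorm 2 (arcoshCoeff 1) = 1 := by
  rw [show arcoshCoeff 1 = -(1 / (3 : ℕ)) by norm_num [arcoshCoeff], padicNorm.neg,
    padicNorm.div, padicNorm.one, (padicNorm.nat_eq_one_iff 3).2 (by norm_num), div_one]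

theorem padicNorm_two_arcoshCoeff_succ_le (a : ℕ) :
    padicNorm 2 (arcoshCoeff (a + 1)) ≤ padicNorm 2 (arcoshCoeff a) := by
  rw [arcoshCoeff, padicNorm.div, padicNorm.neg, padicNorm.mul,
    show (2 * a + 3 : ℚ) = (2 * a + 3 : ℕ) by push_cast; ring,
    (padicNorm.nat_eq_one_iff _).2 (by omega), div_one,
    show (a + 1 : ℚ) = (a + 1 : ℕ) by push_cast; ring]
  exact mul_le_of_le_one_left (padicNorm.nonneg _) (padicNorm.of_nat _)

theorem padicNorm_two_arcoshCoeff_lt_one {a : ℕ} (ha : 2 ≤ a) :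
    padicNorm 2 (arcoshCoeff a) < 1 := by
  induction a, ha using Nat.le_induction with
  | base =>
    rw [show arcoshCoeff 2 = 2 / (15 : ℕ) by norm_num [arcoshCoeff], padicNorm.div,
      (padicNorm.nat_eq_one_iff 15).2 (by norm_num), div_one]
    exact_mod_cast padicNorm.padicNorm_p_lt_one_of_prime (p := 2)
  | succ a _ ih => exact (padicNorm_two_arcoshCoeff_succ_le a).trans_lt ih

theorem padicValRat_two_epsilon_general (ε : ℕ → ℚ) (hε : IsEpsilon ε) (l : ℕ) :
    padicValRat 2 (ε l) = -(l : ℤ) ∧ ε l ≠ 0 := by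
  have hnorm : padicNorm 2 (2 ^ l * ε l) = 1 := by
    simpa only [coeff_mk] using padicNorm_coeff_eq_one_of_mul_eq_one hε.arcoshSeries_mul rfl
      (by rw [arcoshSeries, coeff_mk]; exact padicNorm_two_arcoshCoeff_one)
      (fun a ha => by rw [arcoshSeries, coeff_mk]; exact padicNorm_two_arcoshCoeff_lt_one ha) l
  have hε0 : ε l ≠ 0 := fun h => by simp [h] at hnorm
  have hval : padicValRat 2 (2 ^ l * ε l) = 0 := by
    rwa [padicNorm.eq_zpow_of_nonzero (by positivity), zpow_eq_one_iff_right₀ (by norm_num)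
      (by norm_num), neg_eq_zero] at hnorm
  have htwo : padicValRat 2 2 = 1 := by exact_mod_cast padicValRat.self (p := 2) one_lt_two
  rw [padicValRat.mul (by positivity) hε0, padicValRat.pow, htwo] at hval
  exact ⟨by linarith, hε0⟩

theorem padicValRat_two_epsilon (ε : ℕ → ℚ) (hε : IsEpsilon ε) (l : ℕ) (hl : 1 ≤ l) :
    padicValRat 2 (ε l) = -(l : ℤ) ∧ ε l ≠ 0 :=
  padicValRat_two_epsilon_general ε hε l
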